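/- If S ~ (V/B) χ²_{m-p} (i.e., S/(V+A) ~ χ²_{m-p} with B = V/(V+A)) and B̂ = V(m-p-2)/S with m > p + 2, then E[S(B̂ - B)²] = 2VB. -/

import Mathlib

open MeasureTheory Real

/-! With `k = m - p`, the variable `X = S B / V` is `χ²_k` and
`S (B̂ - B)² = V B · X ((k - 2) / X - 1)²`. Expanding the square,
`E[X ((k - 2) / X - 1)²] = (k - 2)² E[1/X] - 2 (k - 2) + E[X] = 2`, since `E[X] = k` and
`E[1/X] = 1 / (k - 2)`. Both moments are instances of the Gamma integral
`E[X ^ s] = 2 ^ s Γ(k/2 + s) / Γ(k/2)`. -/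

/-- The chi-squared distribution with `k` degrees of freedom, as a measure on `ℝ`. -/
noncomputable def chiSqMeasure (k : ℕ) : Measure ℝ :=
  volume.withDensity fun x => ENNReal.ofReal
    (if 0 < x then x ^ ((k : ℝ) / 2 - 1) * Real.exp (-x / 2) /
        (2 ^ ((k : ℝ) / 2) * Real.Gamma ((k : ℝ) / 2)) else 0)

open Set

lemma integrableOn_rpow_mul_exp_neg_half {a : ℝ} (ha : 0 < a) :
    IntegrableOn (fun x : ℝ => x ^ (a - 1) * exp (-x / 2)) (Ioi 0) := by
  refine (integrableOn_rpow_mul_exp_neg_mul_rpow (s := a - 1) (p := 1) (by linarith) one_pos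
    (by norm_num : (0 : ℝ) < 1 / 2)).congr_fun (fun x _ => ?_) measurableSet_Ioi
  simp only [rpow_one]
  ring_nf

lemma integral_rpow_mul_exp_neg_half {a : ℝ} (ha : 0 < a) :
    ∫ x in Ioi (0 : ℝ), x ^ (a - 1) * exp (-x / 2) = 2 ^ a * Gamma a := by
  have h := integral_rpow_mul_exp_neg_mul_Ioi ha (by norm_num : (0 : ℝ) < 1 / 2)
  rw [show (1 : ℝ) / (1 / 2) = 2 by norm_num] at h
  rw [← h]
  congr with x
  ring_nf

noncomputable def chiSqPDFReal (k : ℕ) (x : ℝ) : ℝ :=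
  if 0 < x then x ^ ((k : ℝ) / 2 - 1) * exp (-x / 2) /
      (2 ^ ((k : ℝ) / 2) * Gamma ((k : ℝ) / 2)) else 0

lemma chiSqMeasure_eq_withDensity_chiSqPDFReal (k : ℕ) :
    chiSqMeasure k = volume.withDensity fun x => ENNReal.ofReal (chiSqPDFReal k x) := rfl

lemma chiSqPDFReal_nonneg (k : ℕ) (x : ℝ) : 0 ≤ chiSqPDFReal k x := by
  unfold chiSqPDFReal
  split_ifs with hx
  · have := Gamma_nonneg_of_nonneg (s := (k : ℝ) / 2) (by positivity)
    positivity
  · rfl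

lemma measurable_chiSqPDFReal (k : ℕ) : Measurable (chiSqPDFReal k) :=
  Measurable.ite measurableSet_Ioi (by fun_prop) measurable_const

lemma support_chiSqPDFReal_mul_subset (k : ℕ) (g : ℝ → ℝ) :
    Function.support (fun x => chiSqPDFReal k x * g x) ⊆ Ioi 0 := by
  refine Function.support_subset_iff'.mpr fun x hx => ?_
  simp only [chiSqPDFReal, if_neg (show ¬0 < x from hx), zero_mul]

lemma integral_chiSqMeasure (k : ℕ) (g : ℝ → ℝ) :
    ∫ x, g x ∂chiSqMeasure k = ∫ x in Ioi 0, chiSqPDFReal k x * g x := by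
  rw [chiSqMeasure_eq_withDensity_chiSqPDFReal, integral_withDensity_eq_integral_toReal_smul
    (measurable_chiSqPDFReal k).ennreal_ofReal (ae_of_all _ fun _ => ENNReal.ofReal_lt_top)]
  simp_rw [ENNReal.toReal_ofReal (chiSqPDFReal_nonneg k _), smul_eq_mul]
  exact (setIntegral_eq_integral_of_forall_compl_eq_zero fun x hx =>
    Function.notMem_support.mp fun h => hx (support_chiSqPDFReal_mul_subset k g h)).symm

lemma integrable_chiSqMeasure_iff (k : ℕ) (g : ℝ → ℝ) :
    Integrable g (chiSqMeasure k) ↔ IntegrableOn (fun x => chiSqPDFReal k x * g x) (Ioi 0) := by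
  rw [chiSqMeasure_eq_withDensity_chiSqPDFReal, integrable_withDensity_iff_integrable_smul'
    (measurable_chiSqPDFReal k).ennreal_ofReal (ae_of_all _ fun _ => ENNReal.ofReal_lt_top)]
  simp_rw [ENNReal.toReal_ofReal (chiSqPDFReal_nonneg k _), smul_eq_mul]
  exact (integrableOn_iff_integrable_of_support_subset (support_chiSqPDFReal_mul_subset k g)).symm


lemma chiSqPDFReal_mul_rpow (k : ℕ) (s : ℝ) {x : ℝ} (hx : 0 < x) :
    chiSqPDFReal k x * x ^ s = (2 ^ ((k : ℝ) / 2) * Gamma ((k : ℝ) / 2))⁻¹ *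
      (x ^ ((k : ℝ) / 2 + s - 1) * exp (-x / 2)) := by
  rw [chiSqPDFReal, if_pos hx, add_sub_right_comm, rpow_add hx]
  ring

lemma integrable_rpow_chiSqMeasure {k : ℕ} {s : ℝ} (hks : 0 < (k : ℝ) / 2 + s) :
    Integrable (fun x => x ^ s) (chiSqMeasure k) := by
  rw [integrable_chiSqMeasure_iff]
  exact IntegrableOn.congr_fun ((integrableOn_rpow_mul_exp_neg_half hks).const_mul _)
    (fun x hx => (chiSqPDFReal_mul_rpow k s hx).symm) measurableSet_Ioi

lemma integral_rpow_chiSqMeasure {k : ℕ} {s : ℝ} (hks : 0 < (k : ℝ) / 2 + s) :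
    ∫ x, x ^ s ∂chiSqMeasure k = 2 ^ s * Gamma ((k : ℝ) / 2 + s) / Gamma ((k : ℝ) / 2) := by
  rw [integral_chiSqMeasure, setIntegral_congr_fun measurableSet_Ioi
    (fun x hx => chiSqPDFReal_mul_rpow k s hx), integral_const_mul,
    integral_rpow_mul_exp_neg_half hks, rpow_add two_pos]
  rcases eq_or_ne (Gamma ((k : ℝ) / 2)) 0 with hΓ | hΓ
  · simp [hΓ]
  · field_simp

lemma integral_chiSqMeasure_congr {k : ℕ} {f g : ℝ → ℝ} (h : EqOn f g (Ioi 0)) :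
    ∫ x, f x ∂chiSqMeasure k = ∫ x, g x ∂chiSqMeasure k := by
  simp_rw [integral_chiSqMeasure]
  exact setIntegral_congr_fun measurableSet_Ioi fun x hx => by rw [h hx]

lemma isProbabilityMeasure_chiSqMeasure {k : ℕ} (hk : 0 < k) :
    IsProbabilityMeasure (chiSqMeasure k) := by
  have hk' : (0 : ℝ) < k / 2 := by positivity
  have hint := integrable_rpow_chiSqMeasure (k := k) (s := 0) (by simpa using hk')
  have hmass := integral_rpow_chiSqMeasure (k := k) (s := 0) (by simpa using hk')
  simp only [rpow_zero, add_zero, one_mul, div_self (Gamma_pos_of_pos hk').ne'] at hint hmass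
  have := (integrable_const_iff.mp hint).resolve_left one_ne_zero
  constructor
  simpa [measureReal_def, ENNReal.toReal_eq_one_iff] using hmass

lemma integrable_id_chiSqMeasure (k : ℕ) : Integrable (fun x => x) (chiSqMeasure k) := by
  simpa using integrable_rpow_chiSqMeasure (k := k) (s := 1) (by positivity)

lemma integral_id_chiSqMeasure (k : ℕ) : ∫ x, x ∂chiSqMeasure k = k := by
  have h := integral_rpow_chiSqMeasure (k := k) (s := 1) (by positivity)
  rcases Nat.eq_zero_or_pos k with rfl | hk
  · simpa using h
  · simp only [rpow_one] at h
    rw [h, Gamma_add_one (by positivity)]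
    have := Gamma_pos_of_pos (by positivity : (0 : ℝ) < k / 2)
    field_simp

lemma integrable_inv_chiSqMeasure {k : ℕ} (hk : 2 < k) :
    Integrable (fun x => x⁻¹) (chiSqMeasure k) := by
  have hk' : (2 : ℝ) < k := by exact_mod_cast hk
  simpa [rpow_neg_one] using integrable_rpow_chiSqMeasure (k := k) (s := -1) (by linarith)

lemma integral_inv_chiSqMeasure {k : ℕ} (hk : 2 < k) :
    ∫ x, x⁻¹ ∂chiSqMeasure k = 1 / ((k : ℝ) - 2) := by
  have hk' : (2 : ℝ) < k := by exact_mod_cast hk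
  have h := integral_rpow_chiSqMeasure (k := k) (s := -1) (by linarith)
  have hΓ : Gamma ((k : ℝ) / 2) = ((k : ℝ) / 2 - 1) * Gamma ((k : ℝ) / 2 - 1) := by
    rw [← Gamma_add_one (by linarith), sub_add_cancel]
  have hΓpos := Gamma_pos_of_pos (by linarith : (0 : ℝ) < k / 2 - 1)
  have hk2 : (k : ℝ) - 2 ≠ 0 := by linarith
  simp only [rpow_neg_one, ← sub_eq_add_neg, hΓ] at h
  rw [h]
  generalize Gamma ((k : ℝ) / 2 - 1) = G at hΓpos
  field_simp

lemma integral_mul_div_sub_one_sq_chiSqMeasure {k : ℕ} (hk : 2 < k) :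
    ∫ x, x * (((k : ℝ) - 2) / x - 1) ^ 2 ∂chiSqMeasure k = 2 := by
  have hk' : (2 : ℝ) < k := by exact_mod_cast hk
  have := isProbabilityMeasure_chiSqMeasure (by omega : 0 < k)
  calc ∫ x, x * (((k : ℝ) - 2) / x - 1) ^ 2 ∂chiSqMeasure k
      = ∫ x, (((k : ℝ) - 2) ^ 2 * x⁻¹ - 2 * ((k : ℝ) - 2)) + x ∂chiSqMeasure k :=
        integral_chiSqMeasure_congr fun x (hx : 0 < x) => by field_simp; ring
    _ = ((k : ℝ) - 2) ^ 2 * ∫ x, x⁻¹ ∂chiSqMeasure k - 2 * ((k : ℝ) - 2) +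
          ∫ x, x ∂chiSqMeasure k := by
        have hinv := (integrable_inv_chiSqMeasure hk).const_mul (((k : ℝ) - 2) ^ 2)
        rw [integral_add ?_ (integrable_id_chiSqMeasure k), integral_sub hinv (integrable_const _),
          integral_const_mul, integral_const, probReal_univ, one_smul]
        exact hinv.sub (integrable_const _)
    _ = 2 := by
        rw [integral_inv_chiSqMeasure hk, integral_id_chiSqMeasure]
        have : (k : ℝ) - 2 ≠ 0 := by linarith
        field_simp
        ring

/-- If `S·B/V ~ χ²_{m-p}` (i.e. `S ~ (V/B) χ²_{m-p}` with `B = V/(V+A)`)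
and `B̂ = V(m-p-2)/S` with `m > p + 2`, then `E[S(B̂ - B)²] = 2VB`. -/
theorem statement8 {m p : ℕ} (hm : m > p + 2)
    (V A : ℝ) (hV : 0 < V) (hA : 0 < A) (B : ℝ) (hB : B = V / (V + A))
    {Ω : Type*} [MeasurableSpace Ω] (P : Measure Ω) [IsProbabilityMeasure P]
    (S : Ω → ℝ) (hmeas : Measurable S)
    (hlaw : Measure.map (fun ω => S ω * B / V) P = chiSqMeasure (m - p)) :
    ∫ ω, S ω * (V * ((m : ℝ) - p - 2) / S ω - B) ^ 2 ∂P = 2 * V * B := by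
  have hBpos : 0 < B := hB ▸ div_pos hV (by linarith)
  have hdof : ((m - p : ℕ) : ℝ) = m - p := by rw [Nat.cast_sub (by omega)]
  have hscale : ∀ ω, S ω * (V * ((m : ℝ) - p - 2) / S ω - B) ^ 2 =
      V * B * (S ω * B / V * ((((m - p : ℕ) : ℝ) - 2) / (S ω * B / V) - 1) ^ 2) := by
    intro ω
    rcases eq_or_ne (S ω) 0 with h0 | h0
    · simp [h0]
    · rw [hdof]
      field_simp
  calc _ = V * B * ∫ x, x * ((((m - p : ℕ) : ℝ) - 2) / x - 1) ^ 2
          ∂Measure.map (fun ω => S ω * B / V) P := by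
        rw [integral_map (by fun_prop) (by fun_prop), ← integral_const_mul]
        exact integral_congr_ae (ae_of_all _ hscale)
    _ = 2 * V * B := by
        rw [hlaw, integral_mul_div_sub_one_sq_chiSqMeasure (by omega)]
        ring
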